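/- Let h : 𝔻 → ℝ be harmonic with |h| ≤ 1 and |h(0)| ≤ a := 2α/(1+α) for a fixed α ∈ (0,1). Then |h(α)| ≤ 4α/(1+α)². -/

import Mathlib

/-!
Harnack's inequality on a disc comes from bounding the Poisson kernel below by
`(R - |w - c|) / (R + |w - c|)` in the Poisson integral formula; on an open disc it follows by
exhausting it with smaller closed discs. Applied to the nonnegative harmonic functions `1 ∓ h` it
gives `1 ∓ h(α) ≥ (1 - α)/(1 + α) · (1 ∓ h(0))`, and `|h(0)| ≤ 2α/(1 + α)` says exactly that
`1 ∓ h(0) ≥ (1 - α)/(1 + α)`.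
-/

/-- A real-valued function on an open subset of `ℂ` is harmonic if it is `C²` there and
its Laplacian `∂²h/∂x² + ∂²h/∂y²` vanishes. -/
def HarmonicOnSet (h : ℂ → ℝ) (V : Set ℂ) : Prop :=
  ContDiffOn ℝ 2 h V ∧ ∀ z ∈ V,
    fderiv ℝ (fun w => fderiv ℝ h w 1) z 1
      + fderiv ℝ (fun w => fderiv ℝ h w Complex.I) z Complex.I = 0

open Complex InnerProductSpace Metric Filter Topology Real

theorem HarmonicOnSet.harmonicOnNhd {h : ℂ → ℝ} {V : Set ℂ} (hh : HarmonicOnSet h V)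
    (hV : IsOpen V) : HarmonicOnNhd h V := by
  intro x hx
  refine ⟨hh.1.contDiffAt (hV.mem_nhds hx), ?_⟩
  filter_upwards [hV.mem_nhds hx] with y hy
  have hD : DifferentiableAt ℝ (fderiv ℝ h) y :=
    ((hh.1.fderiv_of_isOpen hV one_add_one_eq_two.le).differentiableOn one_ne_zero y hy
      ).differentiableAt (hV.mem_nhds hy)
  rw [laplacian_eq_iteratedFDeriv_complexPlane, Pi.zero_apply, ← hh.2 y hy]
  simp [iteratedFDeriv_two_apply, fderiv_clm_apply hD (differentiableAt_const _)]

theorem InnerProductSpace.HarmonicOnNhd.harnack_closedBall {u : ℂ → ℝ} {c w : ℂ} {R : ℝ}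
    (hu : HarmonicOnNhd u (closedBall c R)) (hpos : ∀ z ∈ sphere c R, 0 ≤ u z)
    (hw : w ∈ ball c R) :
    (R - ‖w - c‖) / (R + ‖w - c‖) * u c ≤ u w := by
  have hR : 0 < R := pos_of_mem_ball hw
  have hu' : HarmonicOnNhd u (closedBall c |R|) := by rwa [abs_of_pos hR]
  have hcont : ContinuousOn u (sphere c |R|) := hu'.continuousOn.mono sphere_subset_closedBall
  calc (R - ‖w - c‖) / (R + ‖w - c‖) * u c
      = circleAverage (((R - ‖w - c‖) / (R + ‖w - c‖)) • u) c R := by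
        rw [circleAverage_smul, hu'.circleAverage_eq, smul_eq_mul]
    _ ≤ circleAverage ((re ∘ herglotzRieszKernel c w) • u) c R := by
        apply circleAverage_mono
        · exact (continuousOn_const.smul hcont).circleIntegrable'
        · exact ((continuous_re.comp_continuousOn
            (continuousOn_herglotzRieszKernel_sphere hw)).smul hcont).circleIntegrable'
        · intro z hz
          rw [abs_of_pos hR] at hz
          exact mul_le_mul_of_nonneg_right (le_re_herglotzRieszKernel hz hw) (hpos z hz)
    _ = u w := hu.circleAverage_re_herglotzRieszKernel_smul hw

theorem InnerProductSpace.HarmonicOnNhd.harnack_ball {u : ℂ → ℝ} {c w : ℂ} {R : ℝ}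
    (hu : HarmonicOnNhd u (ball c R)) (hpos : ∀ z ∈ ball c R, 0 ≤ u z)
    (hw : w ∈ ball c R) :
    (R - ‖w - c‖) / (R + ‖w - c‖) * u c ≤ u w := by
  have hwR : ‖w - c‖ < R := mem_ball_iff_norm.1 hw
  have hR : 0 < R := pos_of_mem_ball hw
  have hlim : Tendsto (fun r ↦ (r - ‖w - c‖) / (r + ‖w - c‖) * u c) (𝓝[<] R)
      (𝓝 ((R - ‖w - c‖) / (R + ‖w - c‖) * u c)) :=
    ((ContinuousAt.div (by fun_prop) (by fun_prop) (by positivity)).mul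
      continuousAt_const).tendsto.mono_left nhdsWithin_le_nhds
  refine le_of_tendsto hlim ?_
  filter_upwards [Ioo_mem_nhdsLT hwR] with r ⟨hwr, hrR⟩
  have hsub : closedBall c r ⊆ ball c R := closedBall_subset_ball hrR
  exact (hu.mono hsub).harnack_closedBall (fun z hz ↦ hpos z (hsub (sphere_subset_closedBall hz)))
    (mem_ball_iff_norm.2 hwr)

theorem InnerProductSpace.HarmonicOnNhd.abs_le_one_sub_harnack {u : ℂ → ℝ} {c w : ℂ} {R : ℝ}
    (hu : HarmonicOnNhd u (ball c R)) (hb : ∀ z ∈ ball c R, |u z| ≤ 1)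
    (hw : w ∈ ball c R) :
    |u w| ≤ 1 - (R - ‖w - c‖) / (R + ‖w - c‖) * (1 - |u c|) := by
  have hk : 0 ≤ (R - ‖w - c‖) / (R + ‖w - c‖) := by
    have := mem_ball_iff_norm.1 hw
    exact div_nonneg (by linarith) (by linarith [norm_nonneg (w - c)])
  have hsub := ((harmonicOnNhd_const 1).sub hu).harnack_ball
    (fun z hz ↦ sub_nonneg.2 (abs_le.1 (hb z hz)).2) hw
  have hadd := ((harmonicOnNhd_const 1).add hu).harnack_ball
    (fun z hz ↦ neg_le_iff_add_nonneg'.1 (abs_le.1 (hb z hz)).1) hw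
  simp only [Pi.sub_apply, Pi.add_apply] at hsub hadd
  rw [abs_le]
  constructor <;> cases abs_cases (u c) <;> nlinarith

/-- Explicit Harnack contraction: if `h` is harmonic on the open unit disc with `|h| ≤ 1`
and `|h(0)| ≤ 2α/(1+α)` for a fixed `α ∈ (0,1)`, then `|h(α)| ≤ 4α/(1+α)²`. -/
theorem harnack_disc_contraction (h : ℂ → ℝ)
    (hh : HarmonicOnSet h (Metric.ball (0 : ℂ) 1))
    (hb : ∀ z ∈ Metric.ball (0 : ℂ) 1, |h z| ≤ 1)
    (α : ℝ) (hα0 : 0 < α) (hα1 : α < 1)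
    (h0 : |h 0| ≤ 2 * α / (1 + α)) :
    |h (α : ℂ)| ≤ 4 * α / (1 + α) ^ 2 := by
  have hα : (α : ℂ) ∈ ball (0 : ℂ) 1 := by simpa [abs_of_pos hα0] using hα1
  have key := (hh.harmonicOnNhd isOpen_ball).abs_le_one_sub_harnack hb hα
  rw [sub_zero, norm_real, Real.norm_of_nonneg hα0.le] at key
  have hk : 0 ≤ (1 - α) / (1 + α) := div_nonneg (by linarith) (by linarith)
  have h0' : (1 - α) / (1 + α) ≤ 1 - |h 0| := by
    have : 1 - 2 * α / (1 + α) = (1 - α) / (1 + α) := by field_simp; ring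
    linarith
  calc |h (α : ℂ)| ≤ 1 - (1 - α) / (1 + α) * (1 - |h 0|) := key
    _ ≤ 1 - (1 - α) / (1 + α) * ((1 - α) / (1 + α)) := by gcongr
    _ = 4 * α / (1 + α) ^ 2 := by field_simp; ring
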